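/- Let n ∈ ℤ_{−ε} with n > 0, and consider the module π′(ε,n). Then A = span{v_j : j ∈ ℤ_ε, j ≤ −(n+1)} and B = span{v_j : j ∈ ℤ_ε, j ≤ n−1} are submodules with A ⊂ B; A is irreducible, the quotient module B/A is irreducible of dimension n, and the quotient module V_ε/B is irreducible. (Thus π′(ε,n) has composition series of shape (D_{−n} ] F_n ] D_n).) -/

import Mathlib

namespace SL2Deform

/-- The index set `ℤ_ε = {j : ℤ | (-1)^j = ε}`, for a sign `ε ∈ {1, -1}`
(i.e. a unit of `ℤ`). -/
abbrev idx (ε : ℤˣ) : Type := {j : ℤ // (-1 : ℤˣ) ^ j = ε}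

/-- `V ε`: the complex vector space of finitely supported functions on `ℤ_ε`,
with standard basis `{v_j}`. -/
abbrev V (ε : ℤˣ) : Type := idx ε →₀ ℂ

/-- The standard basis vector `v_j` of `V ε`, for `j ∈ ℤ_ε`. -/
noncomputable def bv (ε : ℤˣ) (j : ℤ) (h : (-1 : ℤˣ) ^ j = ε) : V ε :=
  Finsupp.single ⟨j, h⟩ 1

lemma parity_two : (-1 : ℤˣ) ^ (2 : ℤ) = 1 := by decide
lemma parity_neg_two : (-1 : ℤˣ) ^ (-2 : ℤ) = 1 := by decide
lemma parity_zero : (-1 : ℤˣ) ^ (0 : ℤ) = 1 := by decide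

lemma parity_shift {ε : ℤˣ} {j : ℤ} (h : (-1 : ℤˣ) ^ j = ε) {s : ℤ}
    (hs : (-1 : ℤˣ) ^ s = 1) : (-1 : ℤˣ) ^ (j + s) = ε := by
  rw [zpow_add, h, hs, mul_one]

/-- If `m ∈ ℤ_{-ε}` then `m + 1 ∈ ℤ_ε`. -/
lemma parity_succ {ε : ℤˣ} {m : ℤ} (h : (-1 : ℤˣ) ^ m = -ε) :
    (-1 : ℤˣ) ^ (m + 1) = ε := by
  rw [zpow_add, h, zpow_one]
  simp

/-- If `m ∈ ℤ_{-ε}` then `m - 1 ∈ ℤ_ε`. -/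
lemma parity_pred {ε : ℤˣ} {m : ℤ} (h : (-1 : ℤˣ) ^ m = -ε) :
    (-1 : ℤˣ) ^ (m - 1) = ε := by
  rw [sub_eq_add_neg, zpow_add, h, zpow_neg, zpow_one]
  simp

/-- The linear operator on `V ε` sending `v_j` to `c j • v_{j+s}`,
for an even shift `s`. -/
noncomputable def shiftOp (ε : ℤˣ) (s : ℤ) (hs : (-1 : ℤˣ) ^ s = 1) (c : ℤ → ℂ) :
    V ε →ₗ[ℂ] V ε :=
  Finsupp.lsum ℂ fun j =>
    LinearMap.toSpanSingleton ℂ (V ε)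
      (Finsupp.single ⟨j.1 + s, parity_shift j.2 hs⟩ (c j.1))

/-- `H v_j = j • v_j`. -/
noncomputable def Hop (ε : ℤˣ) : V ε →ₗ[ℂ] V ε :=
  shiftOp ε 0 parity_zero fun j => (j : ℂ)

/-- Principal series: `E v_j = ½(ν + j + 1) • v_{j+2}`. -/
noncomputable def Eop (ε : ℤˣ) (ν : ℂ) : V ε →ₗ[ℂ] V ε :=
  shiftOp ε 2 parity_two fun j => (1 / 2 : ℂ) * (ν + j + 1)

/-- Principal series: `F v_j = ½(ν - j + 1) • v_{j-2}`. -/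
noncomputable def Fop (ε : ℤˣ) (ν : ℂ) : V ε →ₗ[ℂ] V ε :=
  shiftOp ε (-2) parity_neg_two fun j => (1 / 2 : ℂ) * (ν - j + 1)

/-- `f_m(ν) = ½ |ν²-m²|^{1/2} (ν+m)/|ν+m|` for `ν ≠ -m`, and `f_m(-m) = 0`. -/
noncomputable def fm (m : ℤ) (ν : ℂ) : ℂ :=
  if ν = -(m : ℂ) then 0
  else (1 / 2 : ℂ) * (Real.sqrt (‖ν ^ 2 - (m : ℂ) ^ 2‖) : ℝ) * (ν + m) /
    (‖ν + (m : ℂ)‖ : ℝ)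

/-- Deformed module: `E v_{m-1} = f_m(ν) • v_{m+1}`, i.e. `E v_j = f_{j+1}(ν) • v_{j+2}`. -/
noncomputable def PEop (ε : ℤˣ) (ν : ℂ) : V ε →ₗ[ℂ] V ε :=
  shiftOp ε 2 parity_two fun j => fm (j + 1) ν

/-- Deformed module: `F v_{m+1} = f_{-m}(ν) • v_{m-1}`, i.e. `F v_j = f_{-(j-1)}(ν) • v_{j-2}`. -/
noncomputable def PFop (ε : ℤˣ) (ν : ℂ) : V ε →ₗ[ℂ] V ε :=
  shiftOp ε (-2) parity_neg_two fun j => fm (1 - j) ν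

/-- The module `π'(ε,ν)`: `E v_{m-1} = ½(ν - |m|) • v_{m+1}`,
i.e. `E v_j = ½(ν - |j+1|) • v_{j+2}`. -/
noncomputable def E'op (ε : ℤˣ) (ν : ℂ) : V ε →ₗ[ℂ] V ε :=
  shiftOp ε 2 parity_two fun j => (1 / 2 : ℂ) * (ν - ((|j + 1| : ℤ) : ℂ))

/-- The module `π'(ε,ν)`: `F v_{m+1} = ½(ν + |m|) • v_{m-1}`,
i.e. `F v_j = ½(ν + |j-1|) • v_{j-2}`. -/
noncomputable def F'op (ε : ℤˣ) (ν : ℂ) : V ε →ₗ[ℂ] V ε :=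
  shiftOp ε (-2) parity_neg_two fun j => (1 / 2 : ℂ) * (ν + ((|j - 1| : ℤ) : ℂ))

/-- `ν ∈ ℤ_{-ε}`: `ν` is an integer with `(-1)^ν = -ε`. -/
def inZminus (ε : ℤˣ) (ν : ℂ) : Prop :=
  ∃ n : ℤ, ν = (n : ℂ) ∧ (-1 : ℤˣ) ^ n = -ε

section ModuleNotions

variable {M : Type*} [AddCommGroup M] [Module ℂ M]
variable {N : Type*} [AddCommGroup N] [Module ℂ N]

/-- `W` is a submodule for the module with operators `A, B, C`: it is invariant
under all three operators. -/
def Invariant (A B C : M →ₗ[ℂ] M) (W : Submodule ℂ M) : Prop :=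
  (∀ x ∈ W, A x ∈ W) ∧ (∀ x ∈ W, B x ∈ W) ∧ (∀ x ∈ W, C x ∈ W)

/-- The module with operators `A, B, C` is irreducible: its only submodules are
`0` and the whole space. -/
def IsIrreducibleRep (A B C : M →ₗ[ℂ] M) : Prop :=
  ∀ W : Submodule ℂ M, Invariant A B C W → W = ⊥ ∨ W = ⊤

/-- `W` is an irreducible submodule: invariant, nonzero, and with no nonzero
proper invariant subspace. -/
def IsIrreducibleSubmodule (A B C : M →ₗ[ℂ] M) (W : Submodule ℂ M) : Prop :=
  Invariant A B C W ∧ W ≠ ⊥ ∧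
    ∀ U : Submodule ℂ M, Invariant A B C U → U ≤ W → U = ⊥ ∨ U = W

/-- The module with operators `A, B, C` is completely reducible: every invariant
subspace has an invariant complement. -/
def CompletelyReducible (A B C : M →ₗ[ℂ] M) : Prop :=
  ∀ W : Submodule ℂ M, Invariant A B C W →
    ∃ U : Submodule ℂ M, Invariant A B C U ∧ IsCompl W U

/-- The two modules (given by operator triples) are isomorphic. -/
def Intertwined (A B C : M →ₗ[ℂ] M) (A' B' C' : N →ₗ[ℂ] N) : Prop :=
  ∃ e : M ≃ₗ[ℂ] N, (∀ x, e (A x) = A' (e x)) ∧ (∀ x, e (B x) = B' (e x)) ∧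
    (∀ x, e (C x) = C' (e x))

/-- An invariant Hermitian form for the module with operators `A, B, C`
(`A` playing the role of `H`, `B` of `E`, `C` of `F`): a sesquilinear form,
conjugate-symmetric, with `⟨Hv,w⟩ = ⟨v,Hw⟩`, `⟨Ev,w⟩ + ⟨v,Fw⟩ = 0`,
`⟨Fv,w⟩ + ⟨v,Ew⟩ = 0`. -/
structure IsInvHermForm (A B C : M →ₗ[ℂ] M) (Φ : M → M → ℂ) : Prop where
  add_left : ∀ u v w, Φ (u + v) w = Φ u w + Φ v w
  smul_left : ∀ (a : ℂ) (v w : M), Φ (a • v) w = a * Φ v w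
  conj_symm : ∀ v w, Φ w v = (starRingEnd ℂ) (Φ v w)
  inv_A : ∀ v w, Φ (A v) w = Φ v (A w)
  inv_BC : ∀ v w, Φ (B v) w + Φ v (C w) = 0
  inv_CB : ∀ v w, Φ (C v) w + Φ v (B w) = 0

end ModuleNotions

/-- `span{v_j : j ≥ n}`. -/
noncomputable def spanGE (ε : ℤˣ) (n : ℤ) : Submodule ℂ (V ε) :=
  Submodule.span ℂ {x : V ε | ∃ j : idx ε, n ≤ j.1 ∧ x = Finsupp.single j 1}

/-- `span{v_j : j ≤ n}`. -/
noncomputable def spanLE (ε : ℤˣ) (n : ℤ) : Submodule ℂ (V ε) :=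
  Submodule.span ℂ {x : V ε | ∃ j : idx ε, j.1 ≤ n ∧ x = Finsupp.single j 1}

/-- `span{v_j : |j| ≤ n}`. -/
noncomputable def spanAbsLE (ε : ℤˣ) (n : ℤ) : Submodule ℂ (V ε) :=
  Submodule.span ℂ {x : V ε | ∃ j : idx ε, |j.1| ≤ n ∧ x = Finsupp.single j 1}

/-- The diagonal operator `S v_j = c j • v_j`. -/
noncomputable def diagMap (ε : ℤˣ) (c : idx ε → ℂ) : V ε →ₗ[ℂ] V ε :=
  Finsupp.lsum ℂ fun j => LinearMap.toSpanSingleton ℂ (V ε) (Finsupp.single j (c j))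

end SL2Deform

/-!
Since the eigenvalues `j` of `H` on the `v_j` are distinct, every invariant subspace is spanned
by the `v_j` it contains. For `n > 0`, `F v_j` is never zero, while `E v_j = 0` exactly for
`|j + 1| = n`, i.e. `j = n - 1` or `j = -(n + 1)`. So the set of `j` with `v_j` in an invariant
subspace is closed downwards and, if bounded above, has its maximum at one of these two walls:
the invariant subspaces are exactly `0 ⊂ A ⊂ B ⊂ V_ε`, which gives all three irreducibility
claims. The images of the `n` vectors `v_j` with `-(n + 1) < j ≤ n - 1` form a basis of `B/A`.
-/

open Module

namespace Finsupp

variable {ι K : Type*} [Field K]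

theorem single_one_mem_of_diagonal_invariant {d : ι → K} (hd : Function.Injective d)
    {T : (ι →₀ K) →ₗ[K] ι →₀ K} (hT : ∀ x i, T x i = d i * x i)
    {W : Submodule K (ι →₀ K)} (hW : ∀ x ∈ W, T x ∈ W) {x : ι →₀ K} (hx : x ∈ W)
    {j : ι} (hj : j ∈ x.support) : single j 1 ∈ W := by
  classical
  induction hN : x.support.card using Nat.strong_induction_on generalizing x with
  | _ N ih =>
  by_cases hk : ∃ k ∈ x.support, k ≠ j
  · obtain ⟨k, hk, hkj⟩ := hk
    -- `T - d k` kills the `k`-th coordinate of `x` and rescales the others by nonzero factors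
    set y := T x - d k • x
    have hy : ∀ i, y i = (d i - d k) * x i := fun i => by simp [y, hT, sub_mul]
    have hyW : y ∈ W := W.sub_mem (hW x hx) (W.smul_mem _ hx)
    have hsupp : y.support ⊆ x.support.erase k := fun i hi => by
      rw [mem_support_iff, hy] at hi
      exact Finset.mem_erase.2 ⟨fun h => hi (by rw [h, sub_self, zero_mul]),
        mem_support_iff.2 (right_ne_zero_of_mul hi)⟩
    have hjy : j ∈ y.support := by
      rw [mem_support_iff, hy]
      exact mul_ne_zero (sub_ne_zero.2 (hd.ne (Ne.symm hkj))) (mem_support_iff.1 hj)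
    have hcard : y.support.card < N := by
      have := Finset.card_le_card hsupp
      rw [Finset.card_erase_of_mem hk] at this
      have := Finset.card_pos.2 ⟨k, hk⟩
      omega
    exact ih _ hcard hyW hjy rfl
  · push Not at hk
    have hxj : x = single j (x j) := support_subset_singleton.1 fun i hi =>
      Finset.mem_singleton.2 (hk i hi)
    have := W.smul_mem (x j)⁻¹ hx
    rwa [hxj, smul_single, smul_eq_mul, single_eq_same,
      inv_mul_cancel₀ (mem_support_iff.1 hj)] at this

theorem eq_supported_of_diagonal_invariant {d : ι → K} (hd : Function.Injective d)
    {T : (ι →₀ K) →ₗ[K] ι →₀ K} (hT : ∀ x i, T x i = d i * x i)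
    {W : Submodule K (ι →₀ K)} (hW : ∀ x ∈ W, T x ∈ W) :
    W = supported K K {i | single i 1 ∈ W} := by
  refine le_antisymm (fun x hx => (mem_supported K x).2 fun i hi =>
    single_one_mem_of_diagonal_invariant hd hT hW hx hi) ?_
  rw [supported_eq_span_single, Submodule.span_le]
  rintro _ ⟨i, hi, rfl⟩
  exact hi

theorem finrank_supported_of_equiv {s : Set ι} {N : ℕ} (e : Fin N ≃ s) :
    finrank K (supported K K s) = N := by
  rw [((supportedEquivFinsupp s).trans (Finsupp.domLCongr e.symm)).finrank_eq,
    finrank_finsupp_self, Fintype.card_fin]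

end Finsupp

theorem Submodule.finrank_map_mkQ_sup {K M : Type*} [Field K] [AddCommGroup M] [Module K M]
    {Q C : Submodule K M} (h : Disjoint C Q) :
    finrank K ((Q ⊔ C).map Q.mkQ) = finrank K C := by
  have hinj : Function.Injective (Q.mkQ ∘ₗ C.subtype) := by
    rw [← LinearMap.ker_eq_bot, LinearMap.ker_comp, ker_mkQ, ← disjoint_iff_comap_eq_bot]
    exact h
  rw [map_sup, mkQ_map_self, bot_sup_eq, ← LinearMap.finrank_range_of_inj hinj,
    LinearMap.range_comp, range_subtype]

namespace SL2Deform

section Quotient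

variable {M : Type*} [AddCommGroup M] [Module ℂ M] {A B C : M →ₗ[ℂ] M} {Q : Submodule ℂ M}
  (hA : Q ≤ Q.comap A) (hB : Q ≤ Q.comap B) (hC : Q ≤ Q.comap C)

theorem Invariant.comap_mkQ {W : Submodule ℂ (M ⧸ Q)}
    (hW : Invariant (Q.mapQ Q A hA) (Q.mapQ Q B hB) (Q.mapQ Q C hC) W) :
    Invariant A B C (W.comap Q.mkQ) :=
  ⟨fun _ hx => hW.1 _ hx, fun _ hx => hW.2.1 _ hx, fun _ hx => hW.2.2 _ hx⟩

theorem Invariant.map_mkQ {W : Submodule ℂ M} (hW : Invariant A B C W) :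
    Invariant (Q.mapQ Q A hA) (Q.mapQ Q B hB) (Q.mapQ Q C hC) (W.map Q.mkQ) := by
  refine ⟨?_, ?_, ?_⟩ <;> rintro _ ⟨x, hx, rfl⟩
  exacts [⟨A x, hW.1 x hx, rfl⟩, ⟨B x, hW.2.1 x hx, rfl⟩, ⟨C x, hW.2.2 x hx, rfl⟩]

theorem isIrreducibleRep_mapQ (h : ∀ U, Invariant A B C U → Q ≤ U → U = Q ∨ U = ⊤) :
    IsIrreducibleRep (Q.mapQ Q A hA) (Q.mapQ Q B hB) (Q.mapQ Q C hC) := by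
  intro W hW
  rw [← Submodule.map_comap_eq_of_surjective Q.mkQ_surjective W]
  rcases h _ (hW.comap_mkQ hA hB hC) (Submodule.le_comap_mkQ Q W) with hU | hU <;> rw [hU]
  · exact Or.inl (Submodule.mkQ_map_self Q)
  · exact Or.inr (by rw [Submodule.map_top, Submodule.range_mkQ])

theorem isIrreducibleSubmodule_map_mkQ {P : Submodule ℂ M} (hP : Invariant A B C P)
    (hQP : Q < P) (h : ∀ U, Invariant A B C U → Q ≤ U → U ≤ P → U = Q ∨ U = P) :
    IsIrreducibleSubmodule (Q.mapQ Q A hA) (Q.mapQ Q B hB) (Q.mapQ Q C hC) (P.map Q.mkQ) := by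
  have hcomap : (P.map Q.mkQ).comap Q.mkQ = P := by
    rw [Submodule.comap_map_mkQ, sup_eq_right.2 hQP.le]
  refine ⟨hP.map_mkQ hA hB hC, fun hbot => hQP.not_ge ?_, fun W hW hWP => ?_⟩
  · rw [← hcomap, hbot, Submodule.comap_bot, Submodule.ker_mkQ]
  rw [← Submodule.map_comap_eq_of_surjective Q.mkQ_surjective W]
  rcases h _ (hW.comap_mkQ hA hB hC) (Submodule.le_comap_mkQ Q W)
    (hcomap ▸ Submodule.comap_mono hWP) with hU | hU <;> rw [hU]
  · exact Or.inl (Submodule.mkQ_map_self Q)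
  · exact Or.inr rfl

end Quotient

section Weights

variable {ε : ℤˣ}

theorem even_sub_of_zpow_eq {a b : ℤ} (ha : (-1 : ℤˣ) ^ a = ε) (hb : (-1 : ℤˣ) ^ b = ε) :
    Even (a - b) := by
  have h : (-1 : ℤˣ) ^ (a - b) = 1 := by rw [zpow_sub, ha, hb, mul_inv_cancel]
  by_contra hodd
  rw [neg_one_zpow_eq_ite, if_neg hodd] at h
  exact absurd h (by decide)

theorem zpow_eq_of_even_sub {a b : ℤ} (hb : (-1 : ℤˣ) ^ b = ε) (hab : Even (a - b)) :
    (-1 : ℤˣ) ^ a = ε := by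
  rw [← sub_add_cancel a b, zpow_add, hab.neg_one_zpow, hb, one_mul]

theorem isLowerSet_of_sub_two_mem {S : Set (idx ε)}
    (h : ∀ i ∈ S, (⟨i.1 + -2, parity_shift i.2 parity_neg_two⟩ : idx ε) ∈ S) :
    IsLowerSet S := by
  suffices ∀ k : ℕ, ∀ i ∈ S, ∀ j : idx ε, i.1 - j.1 = 2 * k → j ∈ S by
    intro i j (hji : j.1 ≤ i.1) hi
    obtain ⟨r, hr⟩ := even_sub_of_zpow_eq i.2 j.2
    exact this r.toNat i hi j (by omega)
  intro k
  induction k with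
  | zero => intro i hi j hij; rwa [show j = i from Subtype.ext (by omega)]
  | succ k ih => intro i hi j hij; exact ih _ (h i hi) j (by push_cast at hij ⊢; omega)

theorem eq_of_isLowerSet {n : ℤ} {S : Set (idx ε)} (hS : IsLowerSet S)
    (hup : ∀ i ∈ S, |i.1 + 1| ≠ n → (⟨i.1 + 2, parity_shift i.2 parity_two⟩ : idx ε) ∈ S) :
    S = ∅ ∨ S = {i | i.1 ≤ -(n + 1)} ∨ S = {i | i.1 ≤ n - 1} ∨ S = Set.univ := by
  by_cases hbdd : ∃ b : ℤ, ∀ i ∈ S, i.1 ≤ b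
  · rcases S.eq_empty_or_nonempty with hempty | ⟨i₀, hi₀⟩
    · exact Or.inl hempty
    obtain ⟨b, hb⟩ := hbdd
    obtain ⟨m, ⟨hm, hmS⟩, hmax⟩ :=
      Int.exists_greatest_of_bdd (P := fun z => ∃ h, (⟨z, h⟩ : idx ε) ∈ S)
        ⟨b, fun _ ⟨_, hz⟩ => hb _ hz⟩ ⟨i₀.1, i₀.2, hi₀⟩
    have hSm : S = {i | i.1 ≤ m} :=
      Set.ext fun i => ⟨fun hi => hmax _ ⟨i.2, hi⟩, fun hi => hS hi hmS⟩
    have hwall : |m + 1| = n := by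
      by_contra hne
      have : m + 2 ≤ m := hmax _ ⟨_, hup _ hmS hne⟩
      omega
    rcases abs_choice (m + 1) with h | h
    · exact Or.inr (Or.inr (Or.inl (by rw [hSm, show n - 1 = m by omega])))
    · exact Or.inr (Or.inl (by rw [hSm, show -(n + 1) = m by omega]))
  · push Not at hbdd
    refine Or.inr (Or.inr (Or.inr (Set.eq_univ_of_forall fun i => ?_)))
    obtain ⟨s, hs, hlt⟩ := hbdd i.1
    exact hS (show i.1 ≤ s.1 from hlt.le) hs

end Weights

section Operators

variable {ε : ℤˣ}

theorem shiftOp_single (s : ℤ) (hs : (-1 : ℤˣ) ^ s = 1) (c : ℤ → ℂ) (j : idx ε) (a : ℂ) :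
    shiftOp ε s hs c (Finsupp.single j a) =
      Finsupp.single ⟨j.1 + s, parity_shift j.2 hs⟩ (a * c j.1) := by
  simp [shiftOp, Finsupp.smul_single]

theorem Hop_apply (x : V ε) (i : idx ε) : Hop ε x i = i.1 * x i := by
  induction x using Finsupp.induction_linear with
  | zero => simp
  | add f g hf hg => simp [hf, hg, mul_add]
  | single j a =>
    rw [Hop, shiftOp_single]
    rcases eq_or_ne j i with rfl | hji
    · simp [mul_comm]
    · simp [Subtype.ext_iff, Subtype.coe_ne_coe.2 hji]

theorem single_mem_of_shiftOp_mem {W : Submodule ℂ (V ε)} {s : ℤ} {hs : (-1 : ℤˣ) ^ s = 1}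
    {c : ℤ → ℂ} {i : idx ε} (hW : shiftOp ε s hs c (Finsupp.single i 1) ∈ W)
    (hc : c i.1 ≠ 0) : Finsupp.single (⟨i.1 + s, parity_shift i.2 hs⟩ : idx ε) 1 ∈ W := by
  have := W.smul_mem (c i.1)⁻¹ hW
  rwa [shiftOp_single, Finsupp.smul_single, one_mul, smul_eq_mul, inv_mul_cancel₀ hc] at this

theorem spanLE_eq_supported (m : ℤ) : spanLE ε m = Finsupp.supported ℂ ℂ {i | i.1 ≤ m} := by
  rw [Finsupp.supported_eq_span_single, spanLE]
  congr 1
  ext x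
  simp [eq_comm]

theorem single_mem_spanLE_iff {m : ℤ} {i : idx ε} :
    Finsupp.single i 1 ∈ spanLE ε m ↔ i.1 ≤ m := by
  rw [spanLE_eq_supported, Finsupp.supported_eq_span_single, Finsupp.single_mem_span_single]
  rfl

theorem spanLE_le_comap_shiftOp {s : ℤ} {hs : (-1 : ℤˣ) ^ s = 1} {c : ℤ → ℂ} {m : ℤ}
    (h : ∀ j : idx ε, j.1 ≤ m → m < j.1 + s → c j.1 = 0) :
    spanLE ε m ≤ (spanLE ε m).comap (shiftOp ε s hs c) := by
  rw [spanLE]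
  refine Submodule.span_le.2 ?_
  rintro _ ⟨j, hj, rfl⟩
  rw [SetLike.mem_coe, Submodule.mem_comap, ← spanLE, shiftOp_single, one_mul]
  by_cases hjs : j.1 + s ≤ m
  · rw [← mul_one (c j.1), ← smul_eq_mul, ← Finsupp.smul_single]
    exact Submodule.smul_mem _ _ (single_mem_spanLE_iff.2 hjs)
  · rw [h j hj (not_le.1 hjs), Finsupp.single_zero]
    exact Submodule.zero_mem _

theorem invariant_spanLE {m : ℤ} (hm : (-1 : ℤˣ) ^ m = ε) {ν : ℤ} (hν : |m + 1| = ν) :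
    Invariant (Hop ε) (E'op ε ν) (F'op ε ν) (spanLE ε m) := by
  refine ⟨spanLE_le_comap_shiftOp fun j hj hlt => by omega,
    spanLE_le_comap_shiftOp fun j hj hlt => ?_, spanLE_le_comap_shiftOp fun j hj hlt => by omega⟩
  obtain ⟨r, hr⟩ := even_sub_of_zpow_eq j.2 hm
  rw [show j.1 = m by omega, hν, sub_self, mul_zero]

end Operators

section PiPrime

variable {ε : ℤˣ} {n : ℤ}

theorem parity_neg_succ (hn : (-1 : ℤˣ) ^ n = -ε) : (-1 : ℤˣ) ^ (-(n + 1)) = ε :=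
  zpow_eq_of_even_sub (parity_pred hn) ⟨-n, by ring⟩

theorem invariant_spanLE_neg (hn : (-1 : ℤˣ) ^ n = -ε) (hpos : 0 < n) :
    Invariant (Hop ε) (E'op ε n) (F'op ε n) (spanLE ε (-(n + 1))) :=
  invariant_spanLE (parity_neg_succ hn)
    (by rw [show -(n + 1) + 1 = -n by ring, abs_neg, abs_of_pos hpos])

theorem invariant_spanLE_pos (hn : (-1 : ℤˣ) ^ n = -ε) (hpos : 0 < n) :
    Invariant (Hop ε) (E'op ε n) (F'op ε n) (spanLE ε (n - 1)) :=
  invariant_spanLE (parity_pred hn) (by rw [sub_add_cancel, abs_of_pos hpos])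

theorem invariant_eq_of_pi' (hpos : 0 < n) {W : Submodule ℂ (V ε)}
    (hW : Invariant (Hop ε) (E'op ε n) (F'op ε n) W) :
    W = ⊥ ∨ W = spanLE ε (-(n + 1)) ∨ W = spanLE ε (n - 1) ∨ W = ⊤ := by
  obtain ⟨hH, hE, hF⟩ := hW
  set S := {i : idx ε | Finsupp.single i 1 ∈ W}
  have hWS : W = Finsupp.supported ℂ ℂ S :=
    Finsupp.eq_supported_of_diagonal_invariant (d := fun i => (i.1 : ℂ))
      (fun i j h => Subtype.ext (Int.cast_injective h)) Hop_apply hH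
  have hdown : ∀ i ∈ S, (⟨i.1 + -2, parity_shift i.2 parity_neg_two⟩ : idx ε) ∈ S := by
    intro i hi
    have hc : (0 : ℤ) < n + |i.1 - 1| := by positivity
    exact single_mem_of_shiftOp_mem (hF _ hi)
      (mul_ne_zero (by norm_num) (by exact_mod_cast hc.ne'))
  have hup : ∀ i ∈ S, |i.1 + 1| ≠ n → (⟨i.1 + 2, parity_shift i.2 parity_two⟩ : idx ε) ∈ S :=
    fun i hi hne => single_mem_of_shiftOp_mem (hE _ hi)
      (mul_ne_zero (by norm_num) (sub_ne_zero.2 (by exact_mod_cast hne.symm)))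
  rcases eq_of_isLowerSet (isLowerSet_of_sub_two_mem hdown) hup with h | h | h | h <;>
    rw [hWS, h]
  · exact Or.inl Finsupp.supported_empty
  · exact Or.inr (Or.inl (spanLE_eq_supported _).symm)
  · exact Or.inr (Or.inr (Or.inl (spanLE_eq_supported _).symm))
  · exact Or.inr (Or.inr (Or.inr Finsupp.supported_univ))

theorem spanLE_neg_ne_bot (hn : (-1 : ℤˣ) ^ n = -ε) : spanLE ε (-(n + 1)) ≠ ⊥ := by
  intro h
  have := single_mem_spanLE_iff.2 (le_refl (⟨-(n + 1), parity_neg_succ hn⟩ : idx ε).1)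
  rw [h, Submodule.mem_bot, Finsupp.single_eq_zero] at this
  exact one_ne_zero this

theorem spanLE_neg_lt_spanLE_pos (hn : (-1 : ℤˣ) ^ n = -ε) (hpos : 0 < n) :
    spanLE ε (-(n + 1)) < spanLE ε (n - 1) := by
  refine lt_of_le_of_ne (Submodule.span_mono fun _ ⟨j, hj, hx⟩ => ⟨j, by omega, hx⟩) fun h => ?_
  have hmem : Finsupp.single (⟨n - 1, parity_pred hn⟩ : idx ε) 1 ∈ spanLE ε (-(n + 1)) :=
    h ▸ single_mem_spanLE_iff.2 le_rfl
  have : n - 1 ≤ -(n + 1) := single_mem_spanLE_iff.1 hmem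
  omega

theorem spanLE_pos_ne_top (hn : (-1 : ℤˣ) ^ n = -ε) : spanLE ε (n - 1) ≠ ⊤ := by
  intro h
  have hmem : Finsupp.single (⟨n + 1, parity_succ hn⟩ : idx ε) 1 ∈ spanLE ε (n - 1) :=
    h ▸ Submodule.mem_top
  have : n + 1 ≤ n - 1 := single_mem_spanLE_iff.1 hmem
  omega

theorem finrank_map_mkQ_spanLE (hn : (-1 : ℤˣ) ^ n = -ε) (hpos : 0 < n) :
    (finrank ℂ ((spanLE ε (n - 1)).map (spanLE ε (-(n + 1))).mkQ) : ℤ) = n := by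
  set I := {i : idx ε | -(n + 1) < i.1 ∧ i.1 ≤ n - 1}
  let f : Fin n.toNat → I := fun k =>
    ⟨⟨2 * k + 1 - n, zpow_eq_of_even_sub (parity_pred hn) ⟨k - n + 1, by ring⟩⟩, by
      have := k.isLt
      show -(n + 1) < 2 * (k : ℤ) + 1 - n ∧ 2 * (k : ℤ) + 1 - n ≤ n - 1
      omega⟩
  have hf : Function.Bijective f := by
    refine ⟨fun k l hkl => Fin.ext ?_, fun i => ?_⟩
    · have : 2 * (k : ℤ) + 1 - n = 2 * l + 1 - n := congrArg (fun i : I => i.1.1) hkl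
      omega
    · obtain ⟨r, hr⟩ := even_sub_of_zpow_eq i.1.2 (parity_pred hn)
      obtain ⟨hlo, hhi⟩ := i.2
      exact ⟨⟨(r + n - 1).toNat, by omega⟩, Subtype.ext (Subtype.ext (by simp only [f]; omega))⟩
  have hB : spanLE ε (n - 1) = spanLE ε (-(n + 1)) ⊔ Finsupp.supported ℂ ℂ I := by
    rw [spanLE_eq_supported, spanLE_eq_supported, ← Finsupp.supported_union]
    congr 1
    ext i
    simp only [I, Set.mem_union, Set.mem_ofPred_eq]
    omega
  have hdisj : Disjoint (Finsupp.supported ℂ ℂ I) (spanLE ε (-(n + 1))) := by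
    rw [spanLE_eq_supported]
    exact Finsupp.disjoint_supported_supported
      (Set.disjoint_left.2 fun i hi (hi' : i.1 ≤ _) => by have := hi.1; omega)
  rw [hB, Submodule.finrank_map_mkQ_sup hdisj,
    Finsupp.finrank_supported_of_equiv (Equiv.ofBijective f hf)]
  omega

end PiPrime

/-- For `n ∈ ℤ_{-ε}`, `n > 0`, in the module `π'(ε,n)`:
`A = span{v_j : j ≤ -(n+1)}` and `B = span{v_j : j ≤ n-1}` are submodules with
`A ⊂ B`; `A` is irreducible; the quotient `B/A` is irreducible of dimension `n`;
and the quotient `V_ε/B` is irreducible. (Composition series of shape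
`(D_{-n} ] F_n ] D_n)`.) -/
theorem pi'_composition_series (ε : ℤˣ) (n : ℤ)
    (hn : (-1 : ℤˣ) ^ n = -ε) (hpos : 0 < n) :
    Invariant (Hop ε) (E'op ε (n : ℂ)) (F'op ε (n : ℂ)) (spanLE ε (-(n + 1))) ∧
    Invariant (Hop ε) (E'op ε (n : ℂ)) (F'op ε (n : ℂ)) (spanLE ε (n - 1)) ∧
    spanLE ε (-(n + 1)) < spanLE ε (n - 1) ∧
    IsIrreducibleSubmodule (Hop ε) (E'op ε (n : ℂ)) (F'op ε (n : ℂ))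
      (spanLE ε (-(n + 1))) ∧
    (∃ (hH : spanLE ε (-(n + 1)) ≤ (spanLE ε (-(n + 1))).comap (Hop ε))
       (hE : spanLE ε (-(n + 1)) ≤ (spanLE ε (-(n + 1))).comap (E'op ε (n : ℂ)))
       (hF : spanLE ε (-(n + 1)) ≤ (spanLE ε (-(n + 1))).comap (F'op ε (n : ℂ))),
       IsIrreducibleSubmodule
         (Submodule.mapQ (spanLE ε (-(n + 1))) (spanLE ε (-(n + 1))) (Hop ε) hH)
         (Submodule.mapQ (spanLE ε (-(n + 1))) (spanLE ε (-(n + 1))) (E'op ε (n : ℂ)) hE)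
         (Submodule.mapQ (spanLE ε (-(n + 1))) (spanLE ε (-(n + 1))) (F'op ε (n : ℂ)) hF)
         ((spanLE ε (n - 1)).map (spanLE ε (-(n + 1))).mkQ) ∧
       (Module.finrank ℂ ((spanLE ε (n - 1)).map (spanLE ε (-(n + 1))).mkQ) : ℤ) = n) ∧
    (∃ (hH : spanLE ε (n - 1) ≤ (spanLE ε (n - 1)).comap (Hop ε))
       (hE : spanLE ε (n - 1) ≤ (spanLE ε (n - 1)).comap (E'op ε (n : ℂ)))
       (hF : spanLE ε (n - 1) ≤ (spanLE ε (n - 1)).comap (F'op ε (n : ℂ))),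
       IsIrreducibleRep
         (Submodule.mapQ (spanLE ε (n - 1)) (spanLE ε (n - 1)) (Hop ε) hH)
         (Submodule.mapQ (spanLE ε (n - 1)) (spanLE ε (n - 1)) (E'op ε (n : ℂ)) hE)
         (Submodule.mapQ (spanLE ε (n - 1)) (spanLE ε (n - 1)) (F'op ε (n : ℂ)) hF)) := by
  have hA := invariant_spanLE_neg hn hpos
  have hB := invariant_spanLE_pos hn hpos
  have hbotA := bot_lt_iff_ne_bot.2 (spanLE_neg_ne_bot hn)
  have hAB := spanLE_neg_lt_spanLE_pos hn hpos
  have hBtop := lt_top_iff_ne_top.2 (spanLE_pos_ne_top hn)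
  refine ⟨hA, hB, hAB, ⟨hA, hbotA.ne', fun U hU hUA => ?_⟩,
    ⟨hA.1, hA.2.1, hA.2.2, isIrreducibleSubmodule_map_mkQ _ _ _ hB hAB fun U hU hAU hUB => ?_,
      finrank_map_mkQ_spanLE hn hpos⟩,
    ⟨hB.1, hB.2.1, hB.2.2, isIrreducibleRep_mapQ _ _ _ fun U hU hBU => ?_⟩⟩ <;>
  rcases invariant_eq_of_pi' hpos hU with rfl | rfl | rfl | rfl <;>
    first | exact Or.inl rfl | exact Or.inr rfl | (exfalso; order)

end SL2Deform
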